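/- arXiv:1705.08333 — 6 statements merged into one kernel-verified Lean document; each statement's English description precedes it below -/
import Mathlib

section
/- Let (Ω, F, P) be a probability space and let (X_n)_{n≥1} be a sequence of integrable real-valued random variables on it. If (X_n) is W-uniformly integrable (W-UI), i.e. lim_{a→∞} sup_{n≥1} E[(|X_n|−a)·1_{{|X_n|≥a}}] = 0, then (X_n) is W*-uniformly integrable (W*-UI), i.e. lim_{m→∞} sup_{k≥1} Σ_{n=m}^{∞} P(|X_k| > n) = 0 (the sum being over integers n ≥ m). -/
/-!
Since at most `t - (m - 1)` integers `n ≥ m` lie below `t`, Tonelli gives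
`∑_{n ≥ m} P(|X| > n) ≤ E[(|X| - a) 1_{|X| ≥ a}]` with `a = m - 1`:
the W*-tail at level `m` is bounded by the W-tail at level `m - 1`, uniformly in the sequence.
-/

open MeasureTheory Filter Topology
open scoped ENNReal

lemma tsum_indicator_natCast_add_lt_le (m : ℕ) (t : ℝ) :
    ∑' j : ℕ, {x : ℝ | ((m + j : ℕ) : ℝ) < x}.indicator (1 : ℝ → ℝ≥0∞) t ≤
      ENNReal.ofReal (t - (m - 1)) := by
  set N := ⌈t - m⌉₊
  have h_vanish : ∀ j ∉ Finset.range N,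
      {x : ℝ | ((m + j : ℕ) : ℝ) < x}.indicator (1 : ℝ → ℝ≥0∞) t = 0 := by
    intro j hj
    have hNj : (N : ℝ) ≤ j := Nat.cast_le.mpr (by simpa using hj)
    refine Set.indicator_of_notMem (fun ht => ?_) _
    have : t - m ≤ N := Nat.le_ceil _
    simp only [Set.mem_ofPred_eq, Nat.cast_add] at ht
    linarith
  calc ∑' j : ℕ, {x : ℝ | ((m + j : ℕ) : ℝ) < x}.indicator (1 : ℝ → ℝ≥0∞) t
      = ∑ j ∈ Finset.range N, {x : ℝ | ((m + j : ℕ) : ℝ) < x}.indicator (1 : ℝ → ℝ≥0∞) t :=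
        tsum_eq_sum h_vanish
    _ ≤ ∑ _j ∈ Finset.range N, (1 : ℝ≥0∞) :=
        Finset.sum_le_sum fun j _ => Set.indicator_le_self' (fun _ _ => zero_le) t
    _ = N := by simp
    _ ≤ ENNReal.ofReal (t - (m - 1)) := by
        rcases Nat.eq_zero_or_pos N with hN | hN
        · simp [hN]
        · have := Nat.ceil_lt_add_one (Nat.ceil_pos.mp hN).le
          rw [← ENNReal.ofReal_natCast]
          exact ENNReal.ofReal_le_ofReal (by linarith)

lemma tsum_measure_natCast_add_lt_le_lintegral {α : Type*} [MeasurableSpace α] (μ : Measure α)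
    {f : α → ℝ} (hf : Measurable f) (m : ℕ) :
    ∑' j : ℕ, μ {x | ((m + j : ℕ) : ℝ) < f x} ≤ ∫⁻ x, ENNReal.ofReal (f x - (m - 1)) ∂μ := by
  have hmeas : ∀ j : ℕ, MeasurableSet {x | ((m + j : ℕ) : ℝ) < f x} :=
    fun j => measurableSet_lt measurable_const hf
  calc ∑' j : ℕ, μ {x | ((m + j : ℕ) : ℝ) < f x}
      = ∑' j : ℕ, ∫⁻ x, {x | ((m + j : ℕ) : ℝ) < f x}.indicator 1 x ∂μ :=
        tsum_congr fun j => (lintegral_indicator_one (hmeas j)).symm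
    _ = ∫⁻ x, ∑' j : ℕ, {x | ((m + j : ℕ) : ℝ) < f x}.indicator 1 x ∂μ :=
        (lintegral_tsum fun j => (measurable_const.indicator (hmeas j)).aemeasurable).symm
    _ ≤ ∫⁻ x, ENNReal.ofReal (f x - (m - 1)) ∂μ :=
        lintegral_mono fun x => tsum_indicator_natCast_add_lt_le m (f x)

lemma lintegral_ofReal_sub_eq_setIntegral {α : Type*} [MeasurableSpace α] (μ : Measure α)
    [IsFiniteMeasure μ] {f : α → ℝ} (hf : Measurable f) (hfi : Integrable f μ) (a : ℝ) :
    ∫⁻ x, ENNReal.ofReal (f x - a) ∂μ = ENNReal.ofReal (∫ x in {x | a ≤ f x}, (f x - a) ∂μ) := by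
  have hs : MeasurableSet {x | a ≤ f x} := measurableSet_le measurable_const hf
  have h_outside : ∀ x ∉ {x | a ≤ f x}, ENNReal.ofReal (f x - a) = 0 := fun x hx =>
    ENNReal.ofReal_eq_zero.mpr (by simp only [Set.mem_ofPred_eq, not_le] at hx; linarith)
  rw [← setLIntegral_eq_of_support_subset (fun x hx => not_imp_comm.mp (h_outside x) hx)]
  exact (ofReal_integral_eq_lintegral_ofReal (hfi.sub (integrable_const a)).integrableOn
    ((ae_restrict_mem hs).mono fun x hx => sub_nonneg.mpr hx)).symm

/-- W-UI ⇒ W*-UI in a probability space, for integrable random variables.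
W-UI: lim_{a→∞} sup_n E[(|X_n|−a)·1_{|X_n|≥a}] = 0;
W*-UI: lim_{m→∞} sup_k Σ_{n=m}^∞ P(|X_k| > n) = 0 (sum over integers n ≥ m,
rendered by the index shift n = m + j). -/
theorem wui_implies_wstarui {Ω : Type*} [MeasurableSpace Ω] (P : Measure Ω)
    [IsProbabilityMeasure P] (X : ℕ → Ω → ℝ) (hX : ∀ n, Measurable (X n))
    (hint : ∀ n, Integrable (X n) P)
    (hWUI : ∀ ε : ℝ, 0 < ε → ∃ a₀ : ℝ, ∀ a ≥ a₀, ∀ n : ℕ,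
      ∫ ω in {ω | a ≤ |X n ω|}, (|X n ω| - a) ∂P < ε) :
    Tendsto (fun m : ℕ => ⨆ k : ℕ, ∑' j : ℕ, P {ω | ((m + j : ℕ) : ℝ) < |X k ω|})
      atTop (𝓝 0) := by
  rw [ENNReal.tendsto_atTop_zero]
  intro ε hε
  obtain ⟨δ, -, hδ_pos, hδε⟩ := ENNReal.lt_iff_exists_real_btwn.mp hε
  obtain ⟨a₀, ha₀⟩ := hWUI δ (ENNReal.ofReal_pos.mp hδ_pos)
  refine ⟨⌈a₀⌉₊ + 1, fun m hm => iSup_le fun k => ?_⟩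
  have ha : a₀ ≤ (m : ℝ) - 1 := by
    have : (⌈a₀⌉₊ + 1 : ℝ) ≤ m := by exact_mod_cast hm
    linarith [Nat.le_ceil a₀]
  calc ∑' j : ℕ, P {ω | ((m + j : ℕ) : ℝ) < |X k ω|}
      ≤ ∫⁻ ω, ENNReal.ofReal (|X k ω| - (m - 1)) ∂P :=
        tsum_measure_natCast_add_lt_le_lintegral P (hX k).abs m
    _ = ENNReal.ofReal (∫ ω in {ω | (m - 1 : ℝ) ≤ |X k ω|}, (|X k ω| - (m - 1)) ∂P) :=
        lintegral_ofReal_sub_eq_setIntegral P (hX k).abs (hint k).abs _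
    _ ≤ ε := (ENNReal.ofReal_le_ofReal (ha₀ _ ha k).le).trans hδε.le
end

section
/- Let (Ω, F, P) be a probability space and let (X_n)_{n≥1} be a sequence of integrable real-valued random variables on it. If (X_n) is W*-uniformly integrable (W*-UI), i.e. lim_{m→∞} sup_{k≥1} Σ_{n=m}^{∞} P(|X_k| > n) = 0, then (X_n) is W-uniformly integrable (W-UI), i.e. lim_{a→∞} sup_{n≥1} E[(|X_n|−a)·1_{{|X_n|≥a}}] = 0. -/
open MeasureTheory Filter Topology
open scoped ENNReal

/-! Pointwise, `(x - a)⁺ ≤ #{j | m + j < x}` as soon as `a ≥ m + 1`; integrating this bounds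
`E[(|X_n| - a)⁺]` by the tail `∑_{j} P(|X_n| > m + j)` of the W*-UI series, uniformly in `n`. -/

theorem ofReal_sub_le_tsum_indicator_Ioi {x a : ℝ} {m : ℕ} (ha : (m : ℝ) + 1 ≤ a) :
    ENNReal.ofReal (x - a) ≤ ∑' j : ℕ, (Set.Ioi ((m + j : ℕ) : ℝ)).indicator 1 x := by
  rcases le_or_gt x a with hxa | hax
  · simp [ENNReal.ofReal_eq_zero.2 (sub_nonpos.2 hxa)]
  set N := ⌊x - m⌋₊
  have hN : (N : ℝ) ≤ x - m := Nat.floor_le (by linarith)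
  calc ENNReal.ofReal (x - a) ≤ N := by
        rw [← ENNReal.ofReal_natCast]
        exact ENNReal.ofReal_le_ofReal (by linarith [Nat.sub_one_lt_floor (x - m)])
    _ = ∑ j ∈ Finset.range N, (Set.Ioi ((m + j : ℕ) : ℝ)).indicator 1 x := by
        rw [Finset.sum_congr rfl fun j hj => Set.indicator_of_mem ?_ _]
        · simp
        · have : (j : ℝ) < N := by exact_mod_cast Finset.mem_range.mp hj
          simp only [Set.mem_Ioi]
          push_cast
          linarith
    _ ≤ _ := ENNReal.sum_le_tsum _

section

variable {Ω : Type*} [MeasurableSpace Ω] {μ : Measure Ω}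

theorem lintegral_ofReal_sub_le_tsum_measure {f : Ω → ℝ} (hf : Measurable f) {a : ℝ} {m : ℕ}
    (ha : (m : ℝ) + 1 ≤ a) :
    ∫⁻ ω, ENNReal.ofReal (f ω - a) ∂μ ≤ ∑' j : ℕ, μ {ω | ((m + j : ℕ) : ℝ) < f ω} := by
  have hmeas (j : ℕ) : MeasurableSet {ω | ((m + j : ℕ) : ℝ) < f ω} :=
    measurableSet_lt measurable_const hf
  calc ∫⁻ ω, ENNReal.ofReal (f ω - a) ∂μ
      ≤ ∫⁻ ω, ∑' j : ℕ, {ω | ((m + j : ℕ) : ℝ) < f ω}.indicator 1 ω ∂μ :=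
        lintegral_mono fun ω => (ofReal_sub_le_tsum_indicator_Ioi ha).trans_eq
          (tsum_congr fun j => (Set.indicator_comp_right f).symm)
    _ = ∑' j : ℕ, μ {ω | ((m + j : ℕ) : ℝ) < f ω} := by
        rw [lintegral_tsum fun j => (measurable_one.indicator (hmeas j)).aemeasurable]
        exact tsum_congr fun j => lintegral_indicator_one (hmeas j)

theorem ofReal_setIntegral_le_lintegral_ofReal {s : Set Ω} (hs : MeasurableSet s) {g : Ω → ℝ}
    (hg : Measurable g) (hg_nonneg : ∀ ω ∈ s, 0 ≤ g ω) :
    ENNReal.ofReal (∫ ω in s, g ω ∂μ) ≤ ∫⁻ ω, ENNReal.ofReal (g ω) ∂μ := by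
  rw [integral_eq_lintegral_of_nonneg_ae ((ae_restrict_iff' hs).2 (ae_of_all _ hg_nonneg))
    hg.aestronglyMeasurable]
  exact ENNReal.ofReal_toReal_le.trans (setLIntegral_le_lintegral s _)

end

theorem wstarui_implies_wui_general {Ω : Type*} [MeasurableSpace Ω] (P : Measure Ω)
    (X : ℕ → Ω → ℝ) (hX : ∀ n, Measurable (X n))
    (hWstar : Tendsto (fun m : ℕ => ⨆ k : ℕ, ∑' j : ℕ,
      P {ω | ((m + j : ℕ) : ℝ) < |X k ω|}) atTop (𝓝 0)) :
    ∀ ε : ℝ, 0 < ε → ∃ a₀ : ℝ, ∀ a ≥ a₀, ∀ n : ℕ,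
      ∫ ω in {ω | a ≤ |X n ω|}, (|X n ω| - a) ∂P < ε := by
  intro ε hε
  obtain ⟨m, hm⟩ := (hWstar.eventually_lt_const (ENNReal.ofReal_pos.2 hε)).exists
  refine ⟨m + 1, fun a ha n => (ENNReal.ofReal_lt_ofReal_iff hε).1 ?_⟩
  calc ENNReal.ofReal (∫ ω in {ω | a ≤ |X n ω|}, (|X n ω| - a) ∂P)
      ≤ ∫⁻ ω, ENNReal.ofReal (|X n ω| - a) ∂P :=
        ofReal_setIntegral_le_lintegral_ofReal (measurableSet_le measurable_const (hX n).abs)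
          ((hX n).abs.sub_const a) fun ω hω => sub_nonneg.2 hω
    _ ≤ ∑' j : ℕ, P {ω | ((m + j : ℕ) : ℝ) < |X n ω|} :=
        lintegral_ofReal_sub_le_tsum_measure (hX n).abs ha
    _ ≤ ⨆ k : ℕ, ∑' j : ℕ, P {ω | ((m + j : ℕ) : ℝ) < |X k ω|} :=
        le_iSup (fun k => ∑' j : ℕ, P {ω | ((m + j : ℕ) : ℝ) < |X k ω|}) n
    _ < ENNReal.ofReal ε := hm

/-- W*-UI ⇒ W-UI in a probability space, for integrable random variables.
W*-UI: lim_{m→∞} sup_k Σ_{n=m}^∞ P(|X_k| > n) = 0 (sum over integers n ≥ m,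
rendered by the index shift n = m + j);
W-UI: lim_{a→∞} sup_n E[(|X_n|−a)·1_{|X_n|≥a}] = 0. -/
theorem wstarui_implies_wui {Ω : Type*} [MeasurableSpace Ω] (P : Measure Ω)
    [IsProbabilityMeasure P] (X : ℕ → Ω → ℝ) (hX : ∀ n, Measurable (X n))
    (hint : ∀ n, Integrable (X n) P)
    (hWstar : Tendsto (fun m : ℕ => ⨆ k : ℕ, ∑' j : ℕ,
      P {ω | ((m + j : ℕ) : ℝ) < |X k ω|}) atTop (𝓝 0)) :
    ∀ ε : ℝ, 0 < ε → ∃ a₀ : ℝ, ∀ a ≥ a₀, ∀ n : ℕ,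
      ∫ ω in {ω | a ≤ |X n ω|}, (|X n ω| - a) ∂P < ε :=
  wstarui_implies_wui_general P X hX hWstar
end

section
/- Let (Ω, F, P) be a probability space and let (X_n)_{n≥1} be a sequence of integrable real-valued random variables on it. Then (X_n) is uniformly integrable (UI), i.e. lim_{a→∞} sup_{n≥1} E[|X_n|·1_{{|X_n|≥a}}] = 0, if and only if (X_n) is W*-uniformly integrable (W*-UI), i.e. lim_{m→∞} sup_{k≥1} Σ_{n=m}^{∞} P(|X_k| > n) = 0 (the sum being over integers n ≥ m). -/
open MeasureTheory Filter Topology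
open scoped ENNReal

/-!
Summing indicators gives the discrete layer-cake identity
`∑_{j ≥ 0} P(Y > m + j) = E ⌈Y - m⌉₊`. For `m ≥ 1`, `⌈y - m⌉₊` is at most `y · 1_{y ≥ m}`,
and it is at least `(y / 2) · 1_{y ≥ 2m}`. Applied to `Y = |X_k|`, the W*-tail at `m` is
therefore bounded by the UI tail at level `m`, and half the UI tail at level `2m` is bounded by the
W*-tail at `m`, uniformly in `k`.
-/

lemma tsum_indicator_natCast_add_lt (m : ℕ) (y : ℝ) :
    ∑' j : ℕ, (if ((m + j : ℕ) : ℝ) < y then 1 else 0 : ℝ≥0∞) = ⌈y - m⌉₊ := by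
  have hiff : ∀ j : ℕ, ((m + j : ℕ) : ℝ) < y ↔ j ∈ Finset.range ⌈y - m⌉₊ := fun j => by
    rw [Finset.mem_range, Nat.lt_ceil]; push_cast; constructor <;> intro <;> linarith
  simp_rw [hiff]
  rw [tsum_eq_sum (s := Finset.range ⌈y - m⌉₊) (fun j hj => if_neg hj),
    Finset.sum_congr rfl fun j hj => if_pos hj]
  simp

lemma natCeil_sub_le_indicator {m : ℕ} (hm : 1 ≤ m) (y : ℝ) :
    (⌈y - m⌉₊ : ℝ≥0∞) ≤ (Set.Ici (m : ℝ)).indicator ENNReal.ofReal y := by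
  by_cases hy : (m : ℝ) ≤ y
  · rw [Set.indicator_of_mem (Set.mem_Ici.2 hy), ← ENNReal.ofReal_natCast]
    have : (1 : ℝ) ≤ m := by exact_mod_cast hm
    exact ENNReal.ofReal_le_ofReal (by linarith [Nat.ceil_lt_add_one (sub_nonneg.2 hy)])
  · rw [Nat.ceil_eq_zero.2 (by linarith), Nat.cast_zero]
    exact zero_le

lemma indicator_le_two_mul_natCeil_sub (m : ℕ) (y : ℝ) :
    (Set.Ici (2 * m : ℝ)).indicator ENNReal.ofReal y ≤ 2 * ⌈y - m⌉₊ := by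
  by_cases hy : 2 * (m : ℝ) ≤ y
  · rw [Set.indicator_of_mem (Set.mem_Ici.2 hy), ← ENNReal.ofReal_natCast,
      ← ENNReal.ofReal_ofNat 2, ← ENNReal.ofReal_mul zero_le_two]
    exact ENNReal.ofReal_le_ofReal (by linarith [Nat.le_ceil (y - m)])
  · rw [Set.indicator_of_notMem (mt Set.mem_Ici.1 hy)]
    exact zero_le

section

variable {Ω : Type*} [MeasurableSpace Ω] {P : Measure Ω}

lemma tsum_measure_natCast_add_lt {Y : Ω → ℝ} (hY : AEMeasurable Y P) (m : ℕ) :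
    ∑' j : ℕ, P {ω | ((m + j : ℕ) : ℝ) < Y ω} = ∫⁻ ω, (⌈Y ω - m⌉₊ : ℝ≥0∞) ∂P := by
  have hs : ∀ j : ℕ, NullMeasurableSet {ω | ((m + j : ℕ) : ℝ) < Y ω} P :=
    fun j => nullMeasurableSet_lt aemeasurable_const hY
  simp_rw [← lintegral_indicator_one₀ (hs _)]
  rw [← lintegral_tsum (f := fun j => {ω | ((m + j : ℕ) : ℝ) < Y ω}.indicator 1)
    fun j => (aemeasurable_indicator_iff₀ (hs j)).2 aemeasurable_const]
  simp only [Set.indicator_apply, Set.mem_ofPred_eq, Pi.one_apply, tsum_indicator_natCast_add_lt]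

lemma tsum_measure_natCast_add_lt_le_setLIntegral {Y : Ω → ℝ} (hY : AEMeasurable Y P) {m : ℕ}
    (hm : 1 ≤ m) :
    ∑' j : ℕ, P {ω | ((m + j : ℕ) : ℝ) < Y ω}
      ≤ ∫⁻ ω in {ω | (m : ℝ) ≤ Y ω}, ENNReal.ofReal (Y ω) ∂P := by
  rw [tsum_measure_natCast_add_lt hY,
    ← lintegral_indicator₀ (nullMeasurableSet_le aemeasurable_const hY)]
  exact lintegral_mono fun ω => natCeil_sub_le_indicator hm (Y ω)

lemma setLIntegral_le_two_mul_tsum_measure_natCast_add_lt {Y : Ω → ℝ} (hY : AEMeasurable Y P)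
    (m : ℕ) :
    ∫⁻ ω in {ω | 2 * (m : ℝ) ≤ Y ω}, ENNReal.ofReal (Y ω) ∂P
      ≤ 2 * ∑' j : ℕ, P {ω | ((m + j : ℕ) : ℝ) < Y ω} := by
  rw [tsum_measure_natCast_add_lt hY,
    ← lintegral_indicator₀ (nullMeasurableSet_le aemeasurable_const hY),
    ← lintegral_const_mul' _ _ ENNReal.ofNat_ne_top]
  exact lintegral_mono fun ω => indicator_le_two_mul_natCeil_sub m (Y ω)

end

theorem ui_iff_wstarui_general {Ω : Type*} [MeasurableSpace Ω] (P : Measure Ω)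
    (X : ℕ → Ω → ℝ)
    (hint : ∀ n, Integrable (X n) P) :
    (∀ ε : ℝ, 0 < ε → ∃ a₀ : ℝ, ∀ a ≥ a₀, ∀ n : ℕ,
        ∫ ω in {ω | a ≤ |X n ω|}, |X n ω| ∂P < ε)
    ↔ Tendsto (fun m : ℕ => ⨆ k : ℕ, ∑' j : ℕ,
        P {ω | ((m + j : ℕ) : ℝ) < |X k ω|}) atTop (𝓝 0) := by
  have hY : ∀ k, AEMeasurable (fun ω => |X k ω|) P := fun k => (hint k).1.aemeasurable.abs
  have htail : ∀ k (a : ℝ), ENNReal.ofReal (∫ ω in {ω | a ≤ |X k ω|}, |X k ω| ∂P)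
      = ∫⁻ ω in {ω | a ≤ |X k ω|}, ENNReal.ofReal |X k ω| ∂P := fun k _ =>
    ofReal_integral_eq_lintegral_ofReal (hint k).abs.restrict
      (Eventually.of_forall fun _ => abs_nonneg _)
  constructor
  · intro hUI
    refine ENNReal.tendsto_atTop_zero.2 fun ε hε => ?_
    obtain ⟨δ, -, hδ, hδε⟩ := ENNReal.lt_iff_exists_real_btwn.1 hε
    obtain ⟨a₀, ha₀⟩ := hUI δ (ENNReal.ofReal_pos.1 hδ)
    refine ⟨max 1 ⌈a₀⌉₊, fun m hm => iSup_le fun k => ?_⟩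
    calc _ ≤ ∫⁻ ω in {ω | (m : ℝ) ≤ |X k ω|}, ENNReal.ofReal |X k ω| ∂P :=
          tsum_measure_natCast_add_lt_le_setLIntegral (hY k) (le_of_max_le_left hm)
      _ = ENNReal.ofReal (∫ ω in {ω | (m : ℝ) ≤ |X k ω|}, |X k ω| ∂P) := (htail k m).symm
      _ ≤ ε := (ENNReal.ofReal_le_ofReal
          (ha₀ m (Nat.ceil_le.1 (le_of_max_le_right hm)) k).le).trans hδε.le
  · intro hW ε hε
    obtain ⟨m, hm⟩ := (hW.eventually (gt_mem_nhds (ENNReal.ofReal_pos.2 (half_pos hε)))).exists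
    refine ⟨2 * m, fun a ha k => ?_⟩
    rw [← ENNReal.ofReal_lt_ofReal_iff hε, htail]
    calc _ ≤ ∫⁻ ω in {ω | 2 * (m : ℝ) ≤ |X k ω|}, ENNReal.ofReal |X k ω| ∂P :=
          lintegral_mono_set fun ω hω => ha.trans hω
      _ ≤ 2 * ∑' j : ℕ, P {ω | ((m + j : ℕ) : ℝ) < |X k ω|} :=
          setLIntegral_le_two_mul_tsum_measure_natCast_add_lt (hY k) m
      _ < 2 * ENNReal.ofReal (ε / 2) :=
          ENNReal.mul_lt_mul_right two_ne_zero ENNReal.ofNat_ne_top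
            ((le_iSup _ k).trans_lt hm)
      _ = ENNReal.ofReal ε := by
          rw [← ENNReal.ofReal_ofNat 2, ← ENNReal.ofReal_mul zero_le_two,
            mul_div_cancel₀ _ two_ne_zero]

/-- UI ⇔ W*-UI in a probability space, for integrable random variables.
UI: lim_{a→∞} sup_n E[|X_n|·1_{|X_n|≥a}] = 0;
W*-UI: lim_{m→∞} sup_k Σ_{n=m}^∞ P(|X_k| > n) = 0 (sum over integers n ≥ m,
rendered by the index shift n = m + j). -/
theorem ui_iff_wstarui {Ω : Type*} [MeasurableSpace Ω] (P : Measure Ω)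
    [IsProbabilityMeasure P] (X : ℕ → Ω → ℝ) (hX : ∀ n, Measurable (X n))
    (hint : ∀ n, Integrable (X n) P) :
    (∀ ε : ℝ, 0 < ε → ∃ a₀ : ℝ, ∀ a ≥ a₀, ∀ n : ℕ,
        ∫ ω in {ω | a ≤ |X n ω|}, |X n ω| ∂P < ε)
    ↔ Tendsto (fun m : ℕ => ⨆ k : ℕ, ∑' j : ℕ,
        P {ω | ((m + j : ℕ) : ℝ) < |X k ω|}) atTop (𝓝 0) :=
  ui_iff_wstarui_general P X hint
end

section
/- Let (Ω, F) be a measurable space, 𝒫 a nonempty family of probability measures on (Ω, F), and define the upper expectation 𝓔[Y] := sup_{μ∈𝒫} ∫ Y dμ for nonnegative measurable functions Y. Let K be a family of measurable real-valued functions on Ω with sup_{X∈K} 𝓔[|X|] controlled as below. Then K is uniformly integrable, i.e. lim_{c→∞} sup_{X∈K} 𝓔[|X|·1_{{|X|≥c}}] = 0, if and only if there exists a nonnegative function φ on [0,∞) such that lim_{t→∞} φ(t)/t = ∞ and sup_{X∈K} 𝓔[φ(|X|)] < ∞. -/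
/-!
Sufficiency: if `φ t ≥ A t` for `t ≥ c`, then `A · 𝓔[|X| 1_{|X| ≥ c}] ≤ 𝓔[φ(|X|)] ≤ M`, so the tails
are uniformly at most `M / A`. Necessity: choose levels `c n → ∞` whose uniform tails are at most
`2⁻ⁿ` and take `φ t = ∑ₙ (t - c n)⁺`. Each hinge `(t - c n)⁺` grows linearly, so `φ` is superlinear,
while `(|X| - c n)⁺ ≤ |X| 1_{|X| ≥ c n}`; countable subadditivity of `𝓔` on measurable functions
bounds `𝓔[φ(|X|)]` by `∑ₙ 2⁻ⁿ`.
-/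

open MeasureTheory Filter Topology

/-- Upper (sublinear) expectation associated with a family of probability measures:
𝓔[f] = sup_{μ∈Pr} ∫ f dμ, for nonnegative f, realized via the lower Lebesgue integral. -/
noncomputable def upperExp {Ω : Type*} [MeasurableSpace Ω]
    (Pr : Set (MeasureTheory.Measure Ω)) (f : Ω → ℝ) : ENNReal :=
  ⨆ μ ∈ Pr, ∫⁻ ω, ENNReal.ofReal (f ω) ∂μ

section UpperExpectation

variable {Ω : Type*} [MeasurableSpace Ω] (Pr : Set (Measure Ω))

lemma upperExp_mono {f g : Ω → ℝ} (hfg : ∀ ω, f ω ≤ g ω) : upperExp Pr f ≤ upperExp Pr g :=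
  iSup₂_mono fun _ _ => lintegral_mono fun ω => ENNReal.ofReal_le_ofReal (hfg ω)

lemma upperExp_const_mul {a : ℝ} (ha : 0 ≤ a) (f : Ω → ℝ) :
    upperExp Pr (fun ω => a * f ω) = ENNReal.ofReal a * upperExp Pr f := by
  simp only [upperExp, ENNReal.ofReal_mul ha, lintegral_const_mul' _ _ ENNReal.ofReal_ne_top,
    ENNReal.mul_iSup]

lemma upperExp_tsum_le {f : ℕ → Ω → ℝ} (hf : ∀ n, Measurable (f n)) (hf0 : ∀ n ω, 0 ≤ f n ω)
    (hsum : ∀ ω, Summable fun n => f n ω) :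
    upperExp Pr (fun ω => ∑' n, f n ω) ≤ ∑' n, upperExp Pr (f n) := by
  refine iSup₂_le fun μ hμ => ?_
  calc ∫⁻ ω, ENNReal.ofReal (∑' n, f n ω) ∂μ
      = ∑' n, ∫⁻ ω, ENNReal.ofReal (f n ω) ∂μ := by
        rw [← lintegral_tsum fun n => (hf n).ennreal_ofReal.aemeasurable]
        exact lintegral_congr fun ω => ENNReal.ofReal_tsum_of_nonneg (hf0 · ω) (hsum ω)
    _ ≤ ∑' n, upperExp Pr (f n) := ENNReal.tsum_le_tsum fun n => le_iSup₂_of_le μ hμ le_rfl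

end UpperExpectation

lemma ENNReal.tendsto_nhds_zero_of_forall_ofReal_mul_le {α : Type*} {l : Filter α}
    {u : α → ENNReal} {M : ENNReal} (hM : M ≠ ⊤)
    (h : ∀ A : ℝ, 0 < A → ∀ᶠ x in l, ENNReal.ofReal A * u x ≤ M) : Tendsto u l (𝓝 0) := by
  have hlim : Tendsto (fun A : ℝ => M * (ENNReal.ofReal A)⁻¹) atTop (𝓝 0) := by
    simpa using ENNReal.Tendsto.const_mul
      (tendsto_inv_iff.2 ENNReal.tendsto_ofReal_atTop) (Or.inr hM)
  refine ENNReal.tendsto_nhds_zero.2 fun ε hε => ?_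
  obtain ⟨A, hAε, hA⟩ :=
    ((ENNReal.tendsto_nhds_zero.1 hlim ε hε).and (eventually_gt_atTop 0)).exists
  filter_upwards [h A hA] with x hx
  refine le_trans ?_ hAε
  rw [← div_eq_mul_inv, ENNReal.le_div_iff_mul_le (Or.inl (ENNReal.ofReal_pos.2 hA).ne')
    (Or.inl ENNReal.ofReal_ne_top), mul_comm]
  exact hx

lemma exists_seq_tendsto_atTop_tsum_lt_top {S : ℝ → ENNReal} (hS : Tendsto S atTop (𝓝 0)) :
    ∃ c : ℕ → ℝ, Tendsto c atTop atTop ∧ (∀ n, 0 ≤ c n) ∧ ∑' n, S (c n) < ⊤ := by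
  have hc : ∀ n : ℕ, ∃ x, (n : ℝ) ≤ x ∧ S x ≤ 2⁻¹ ^ n := fun n =>
    ((eventually_ge_atTop (n : ℝ)).and (ENNReal.tendsto_nhds_zero.1 hS _
      (ENNReal.pow_pos (ENNReal.inv_pos.2 ENNReal.ofNat_ne_top) n))).exists
  choose c hcn hcS using hc
  refine ⟨c, tendsto_atTop_mono hcn tendsto_natCast_atTop_atTop,
    fun n => (Nat.cast_nonneg n).trans (hcn n), ?_⟩
  calc ∑' n, S (c n) ≤ ∑' n : ℕ, 2⁻¹ ^ n := ENNReal.tsum_le_tsum hcS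
    _ < ⊤ := by rw [ENNReal.tsum_geometric_two]; exact ENNReal.ofNat_lt_top

section Hinge

noncomputable def hingeSum (c : ℕ → ℝ) (t : ℝ) : ℝ := ∑' n, max (t - c n) 0

variable {c : ℕ → ℝ}

lemma hingeSum_nonneg (t : ℝ) : 0 ≤ hingeSum c t :=
  tsum_nonneg fun _ => le_max_right _ _

lemma summable_hinge (hc : Tendsto c atTop atTop) (t : ℝ) :
    Summable fun n => max (t - c n) 0 := by
  obtain ⟨N, hN⟩ := eventually_atTop.1 (hc.eventually_ge_atTop t)
  refine summable_of_ne_finset_zero (s := Finset.range N) fun n hn => ?_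
  exact max_eq_right (sub_nonpos.2 (hN n (by simpa using hn)))

lemma sum_range_sub_le_hingeSum (hc : Tendsto c atTop atTop) (N : ℕ) (t : ℝ) :
    ∑ n ∈ Finset.range N, (t - c n) ≤ hingeSum c t :=
  (Finset.sum_le_sum fun _ _ => le_max_left _ _).trans
    ((summable_hinge hc t).sum_le_tsum _ fun _ _ => le_max_right _ _)

lemma tendsto_hingeSum_div_atTop (hc : Tendsto c atTop atTop) :
    Tendsto (fun t => hingeSum c t / t) atTop atTop := by
  refine tendsto_atTop.2 fun b => ?_
  obtain ⟨N, hbN⟩ := exists_nat_gt b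
  set C := ∑ n ∈ Finset.range N, c n
  -- `hingeSum c t / t ≥ N - C / t` for `t > 0`, and the right-hand side tends to `N > b`.
  have hlim : Tendsto (fun t : ℝ => N - C / t) atTop (𝓝 N) := by
    simpa using tendsto_const_nhds.sub ((tendsto_const_nhds (x := C)).div_atTop tendsto_id)
  filter_upwards [hlim.eventually (lt_mem_nhds hbN), eventually_gt_atTop 0] with t hbt ht
  refine hbt.le.trans ?_
  have hsum : ∑ n ∈ Finset.range N, (t - c n) = N * t - C := by
    simp [Finset.sum_sub_distrib, C]
  rw [le_div_iff₀ ht, sub_mul, div_mul_cancel₀ _ ht.ne', ← hsum]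
  exact sum_range_sub_le_hingeSum hc N t

lemma max_sub_le_indicator {Ω : Type*} (f : Ω → ℝ) {a : ℝ} (ha : 0 ≤ a) (ω : Ω) :
    max (f ω - a) 0 ≤ {ω | a ≤ f ω}.indicator f ω := by
  by_cases h : a ≤ f ω
  · rw [Set.indicator_of_mem (by exact h)]
    exact max_le (by linarith) (ha.trans h)
  · rw [Set.indicator_of_notMem (by exact h)]
    exact (max_eq_right (by linarith)).le

lemma upperExp_hingeSum_le {Ω : Type*} [MeasurableSpace Ω] (Pr : Set (Measure Ω))
    (hc : Tendsto c atTop atTop) (hc0 : ∀ n, 0 ≤ c n) {f : Ω → ℝ} (hf : Measurable f) :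
    upperExp Pr (fun ω => hingeSum c (f ω))
      ≤ ∑' n, upperExp Pr ({ω | c n ≤ f ω}.indicator f) :=
  (upperExp_tsum_le Pr (fun _ => (hf.sub measurable_const).max measurable_const)
    (fun _ _ => le_max_right _ _) fun ω => summable_hinge hc (f ω)).trans
    (ENNReal.tsum_le_tsum fun n => upperExp_mono Pr (max_sub_le_indicator f (hc0 n)))

end Hinge

lemma ofReal_mul_upperExp_indicator_le {Ω : Type*} [MeasurableSpace Ω] (Pr : Set (Measure Ω))
    {φ : ℝ → ℝ} {A a : ℝ} (hA : 0 ≤ A) (hφ0 : ∀ t, 0 ≤ t → 0 ≤ φ t)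
    (hφ : ∀ t, a ≤ t → A * t ≤ φ t) {f : Ω → ℝ} (hf : ∀ ω, 0 ≤ f ω) :
    ENNReal.ofReal A * upperExp Pr ({ω | a ≤ f ω}.indicator f) ≤ upperExp Pr fun ω => φ (f ω) := by
  rw [← upperExp_const_mul Pr hA]
  refine upperExp_mono Pr fun ω => ?_
  by_cases h : a ≤ f ω
  · rw [Set.indicator_of_mem (by exact h)]
    exact hφ _ h
  · rw [Set.indicator_of_notMem (by exact h), mul_zero]
    exact hφ0 _ (hf ω)

theorem de_la_vallee_poussin_general {Ω : Type*} [MeasurableSpace Ω]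
    (Pr : Set (Measure Ω))
    (K : Set (Ω → ℝ)) (hK : ∀ X ∈ K, Measurable X) :
    Tendsto (fun c : ℝ => ⨆ X ∈ K,
        upperExp Pr ({ω | c ≤ |X ω|}.indicator fun ω => |X ω|)) atTop (𝓝 0)
    ↔ ∃ φ : ℝ → ℝ, (∀ t : ℝ, 0 ≤ t → 0 ≤ φ t) ∧
        Tendsto (fun t : ℝ => φ t / t) atTop atTop ∧
        (⨆ X ∈ K, upperExp Pr fun ω => φ |X ω|) < ⊤ := by
  constructor
  · intro hUI
    obtain ⟨c, hc, hc0, hsum⟩ := exists_seq_tendsto_atTop_tsum_lt_top hUI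
    refine ⟨hingeSum c, fun t _ => hingeSum_nonneg t, tendsto_hingeSum_div_atTop hc,
      lt_of_le_of_lt (iSup₂_le fun X hX => ?_) hsum⟩
    calc upperExp Pr (fun ω => hingeSum c |X ω|)
        ≤ ∑' n, upperExp Pr ({ω | c n ≤ |X ω|}.indicator fun ω => |X ω|) :=
          upperExp_hingeSum_le Pr hc hc0 (hK X hX).abs
      _ ≤ _ := ENNReal.tsum_le_tsum fun n => le_iSup₂_of_le X hX le_rfl
  · rintro ⟨φ, hφ0, hφ, hM⟩
    refine ENNReal.tendsto_nhds_zero_of_forall_ofReal_mul_le hM.ne fun A hA => ?_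
    obtain ⟨a, ha⟩ := eventually_atTop.1
      ((hφ.eventually_ge_atTop A).and (eventually_gt_atTop 0))
    filter_upwards [eventually_ge_atTop a] with c hc
    have hφA : ∀ t, c ≤ t → A * t ≤ φ t := fun t ht =>
      have h := ha t (hc.trans ht)
      (le_div_iff₀ h.2).1 h.1
    simp only [ENNReal.mul_iSup]
    refine iSup₂_le fun X hX => ?_
    calc ENNReal.ofReal A * upperExp Pr ({ω | c ≤ |X ω|}.indicator fun ω => |X ω|)
        ≤ upperExp Pr fun ω => φ |X ω| :=
          ofReal_mul_upperExp_indicator_le Pr hA.le hφ0 hφA fun ω => abs_nonneg (X ω)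
      _ ≤ _ := le_iSup₂_of_le X hX le_rfl

/-- de La Vallée Poussin criterion for uniform integrability under an upper expectation:
K is UI (lim_{c→∞} sup_{X∈K} 𝓔[|X|·1_{|X|≥c}] = 0) iff there is a nonnegative
function φ on [0,∞) with φ(t)/t → ∞ and sup_{X∈K} 𝓔[φ(|X|)] < ∞. -/
theorem de_la_vallee_poussin {Ω : Type*} [MeasurableSpace Ω]
    (Pr : Set (Measure Ω)) (hne : Pr.Nonempty) (hP : ∀ μ ∈ Pr, IsProbabilityMeasure μ)
    (K : Set (Ω → ℝ)) (hK : ∀ X ∈ K, Measurable X)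
    (hL1 : ∀ X ∈ K, upperExp Pr (fun ω => |X ω|) < ⊤) :
    Tendsto (fun c : ℝ => ⨆ X ∈ K,
        upperExp Pr ({ω | c ≤ |X ω|}.indicator fun ω => |X ω|)) atTop (𝓝 0)
    ↔ ∃ φ : ℝ → ℝ, (∀ t : ℝ, 0 ≤ t → 0 ≤ φ t) ∧
        Tendsto (fun t : ℝ => φ t / t) atTop atTop ∧
        (⨆ X ∈ K, upperExp Pr fun ω => φ |X ω|) < ⊤ :=
  de_la_vallee_poussin_general Pr K hK
end

section
/- Let (Ω, F) be a measurable space, 𝒫 a nonempty family of probability measures on (Ω, F), and 𝓔[Y] := sup_{μ∈𝒫} ∫ Y dμ the associated upper expectation. If a family K of measurable real-valued functions on Ω is S-uniformly integrable, i.e. lim_{m→∞} sup_{X∈K} Σ_{n=m}^{∞} 𝓔[1_{{|X|>n}}] = 0 (the sum over integers n ≥ m), then K is W-uniformly integrable, i.e. lim_{a→∞} sup_{X∈K} 𝓔[(|X|−a)·1_{{|X|≥a}}] = 0. -/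
/-
Fix `a ≥ 0` and put `n = ⌊a⌋₊`. Pointwise, `(y - a)⁺ ≤ (y - n)⁺ ≤ #{j | n + j < y}`, so
`(|X| - a)·1_{|X| ≥ a} ≤ ∑_j 1_{|X| > n + j}`. Integrating against each `μ ∈ Pr` and taking
suprema gives `𝓔[(|X| - a)·1_{|X| ≥ a}] ≤ ∑_{j ≥ 0} 𝓔[1_{|X| > n + j}]`, and the right-hand side,
after the supremum over `X ∈ K`, tends to `0` as `a → ∞` by S-uniform integrability.
-/

open MeasureTheory Filter Topology

theorem ENNReal.ofReal_sub_natCast_le_tsum_indicator (n : ℕ) (y : ℝ) :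
    ENNReal.ofReal (y - n) ≤ ∑' j : ℕ, {t : ℝ | ((n + j : ℕ) : ℝ) < t}.indicator 1 y := by
  have hlt : ∀ j ∈ Finset.range ⌈y - n⌉₊, y ∈ {t : ℝ | ((n + j : ℕ) : ℝ) < t} := by
    intro j hj
    have : (j : ℝ) < y - n := Nat.lt_ceil.mp (Finset.mem_range.mp hj)
    show ((n + j : ℕ) : ℝ) < y
    push_cast
    linarith
  calc ENNReal.ofReal (y - n) ≤ ENNReal.ofReal ⌈y - n⌉₊ := by gcongr; exact Nat.le_ceil _
    _ = ∑ j ∈ Finset.range ⌈y - n⌉₊, {t : ℝ | ((n + j : ℕ) : ℝ) < t}.indicator 1 y := by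
      rw [Finset.sum_congr rfl fun j hj => Set.indicator_of_mem (hlt j hj) 1]
      simp
    _ ≤ _ := ENNReal.sum_le_tsum _

/-- Each `s i` may be replaced by a measurable hull of the same measure, after which
`lintegral_tsum` applies. -/
theorem MeasureTheory.lintegral_tsum_indicator_one_le {α ι : Type*} [MeasurableSpace α]
    [Countable ι] (μ : Measure α) (s : ι → Set α) :
    ∫⁻ x, ∑' i, (s i).indicator 1 x ∂μ ≤ ∑' i, μ (s i) :=
  calc ∫⁻ x, ∑' i, (s i).indicator 1 x ∂μ
      ≤ ∫⁻ x, ∑' i, (toMeasurable μ (s i)).indicator 1 x ∂μ :=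
        lintegral_mono fun x => ENNReal.tsum_le_tsum fun i =>
          Set.indicator_le_indicator_of_subset (subset_toMeasurable _ _) (fun _ => zero_le) x
    _ = ∑' i, ∫⁻ x, (toMeasurable μ (s i)).indicator 1 x ∂μ :=
        lintegral_tsum fun i => (measurable_one.indicator (measurableSet_toMeasurable _ _)).aemeasurable
    _ = ∑' i, μ (s i) := by
        simp_rw [lintegral_indicator_one (measurableSet_toMeasurable _ _), measure_toMeasurable]

theorem upperExp_indicator_sub_le_tsum {Ω : Type*} [MeasurableSpace Ω]
    (Pr : Set (Measure Ω)) (Y : Ω → ℝ) {a : ℝ} (ha : 0 ≤ a) :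
    upperExp Pr ({ω | a ≤ Y ω}.indicator fun ω => Y ω - a) ≤
      ∑' j : ℕ, ⨆ μ ∈ Pr, μ {ω | ((⌊a⌋₊ + j : ℕ) : ℝ) < Y ω} := by
  set A : ℕ → Set Ω := fun j => {ω | ((⌊a⌋₊ + j : ℕ) : ℝ) < Y ω}
  have hpt : ∀ ω, ENNReal.ofReal (({ω | a ≤ Y ω}.indicator fun ω => Y ω - a) ω) ≤
      ∑' j, (A j).indicator 1 ω := fun ω =>
    calc ENNReal.ofReal (({ω | a ≤ Y ω}.indicator fun ω => Y ω - a) ω)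
        ≤ ENNReal.ofReal (Y ω - ⌊a⌋₊) := by
          rw [Set.indicator_apply]
          split_ifs
          · gcongr; exact Nat.floor_le ha
          · simp
      _ ≤ ∑' j, (A j).indicator 1 ω := ENNReal.ofReal_sub_natCast_le_tsum_indicator _ _
  refine iSup₂_le fun μ hμ => ?_
  calc ∫⁻ ω, ENNReal.ofReal (({ω | a ≤ Y ω}.indicator fun ω => Y ω - a) ω) ∂μ
      ≤ ∫⁻ ω, ∑' j, (A j).indicator 1 ω ∂μ := lintegral_mono hpt
    _ ≤ ∑' j, μ (A j) := lintegral_tsum_indicator_one_le μ A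
    _ ≤ ∑' j, ⨆ ν ∈ Pr, ν (A j) :=
        ENNReal.tsum_le_tsum fun j => le_iSup₂ (f := fun ν (_ : ν ∈ Pr) => ν (A j)) μ hμ

theorem sui_implies_wui_sublinear_general {Ω : Type*} [MeasurableSpace Ω]
    (Pr : Set (Measure Ω))
    (K : Set (Ω → ℝ))
    (hSUI : Tendsto (fun m : ℕ => ⨆ X ∈ K, ∑' j : ℕ,
        ⨆ μ ∈ Pr, μ {ω | ((m + j : ℕ) : ℝ) < |X ω|}) atTop (𝓝 0)) :
    Tendsto (fun a : ℝ => ⨆ X ∈ K,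
        upperExp Pr ({ω | a ≤ |X ω|}.indicator fun ω => |X ω| - a)) atTop (𝓝 0) := by
  refine tendsto_of_tendsto_of_tendsto_of_le_of_le' tendsto_const_nhds
    (hSUI.comp tendsto_nat_floor_atTop) (Eventually.of_forall fun _ => zero_le) ?_
  filter_upwards [eventually_ge_atTop 0] with a ha
  exact iSup₂_mono fun X _ => upperExp_indicator_sub_le_tsum Pr (fun ω => |X ω|) ha

/-- S-UI ⇒ W-UI under an upper expectation:
if lim_{m→∞} sup_{X∈K} Σ_{n=m}^∞ 𝓔[1_{|X|>n}] = 0 (sum over integers n ≥ m,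
rendered by the index shift n = m + j, with 𝓔[1_A] = sup_{μ∈Pr} μ(A)) then
lim_{a→∞} sup_{X∈K} 𝓔[(|X|−a)·1_{|X|≥a}] = 0. -/
theorem sui_implies_wui_sublinear {Ω : Type*} [MeasurableSpace Ω]
    (Pr : Set (Measure Ω)) (hne : Pr.Nonempty) (hP : ∀ μ ∈ Pr, IsProbabilityMeasure μ)
    (K : Set (Ω → ℝ)) (hK : ∀ X ∈ K, Measurable X)
    (hSUI : Tendsto (fun m : ℕ => ⨆ X ∈ K, ∑' j : ℕ,
        ⨆ μ ∈ Pr, μ {ω | ((m + j : ℕ) : ℝ) < |X ω|}) atTop (𝓝 0)) :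
    Tendsto (fun a : ℝ => ⨆ X ∈ K,
        upperExp Pr ({ω | a ≤ |X ω|}.indicator fun ω => |X ω| - a)) atTop (𝓝 0) :=
  sui_implies_wui_sublinear_general Pr K hSUI
end

section
/- Let Ω = ℕ = {0,1,2,…} with the discrete σ-algebra. For each integer n ≥ 2, let P_n be the probability measure on Ω with P_n({n}) = 1/(n·ln n) and P_n({0}) = 1 − 1/(n·ln n), and let X: Ω → ℝ be X(k) = k. Then for every integer m ≥ 2, the series Σ_{n=m}^{∞} sup_{k≥2} P_k(X > n) diverges to +∞ (indeed sup_{k≥2} P_k(X > n) = 1/((n+1)·ln(n+1)) for n ≥ 2); consequently the singleton family {X} is not S-uniformly integrable for the upper expectation 𝓔 = sup_{n≥2} E_{P_n}. -/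
/-!
`P k` is carried by `{0, k}`, so `P k (X > n)` is `1 / (k log k)` for `k > n` and `0` otherwise.
As `x ↦ 1 / (x log x)` decreases, the supremum over `k` is attained at `k = n + 1`, and the series
of these suprema is a tail of `∑ 1 / (n log n)`, which diverges by Cauchy condensation.
-/

open MeasureTheory Filter Topology ENNReal

theorem Real.antitoneOn_one_div_mul_log :
    AntitoneOn (fun x : ℝ => 1 / (x * Real.log x)) (Set.Ioi 1) := by
  intro a (ha : 1 < a) b _ hab
  have hlog_a : 0 < Real.log a := Real.log_pos ha
  have ha_pos : 0 < a := by linarith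
  apply one_div_le_one_div_of_le (by positivity)
  exact mul_le_mul hab (Real.log_le_log ha_pos hab) hlog_a.le (by linarith)

theorem ENNReal.antitoneOn_ofReal_one_div_natCast_mul_log :
    AntitoneOn (fun k : ℕ => ENNReal.ofReal (1 / (k * Real.log k))) (Set.Ioi 1) :=
  fun a (ha : 1 < a) b (hb : 1 < b) hab => ENNReal.ofReal_le_ofReal <|
    Real.antitoneOn_one_div_mul_log (show (1 : ℝ) < a by exact_mod_cast ha)
      (show (1 : ℝ) < b by exact_mod_cast hb) (Nat.cast_le.2 hab)

/-- Cauchy condensation, with `2 ^ k / (2 ^ k * log (2 ^ k)) = 1 / (k * log 2)`. -/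
theorem Real.not_summable_one_div_natCast_mul_log :
    ¬ Summable fun n : ℕ => 1 / (n * Real.log n) := by
  have h_nonneg : 0 ≤ᶠ[atTop] fun n : ℕ => 1 / (n * Real.log n) :=
    Eventually.of_forall fun n => by
      have := Real.log_natCast_nonneg n
      positivity
  have h_mono : ∀ᶠ n : ℕ in atTop,
      1 / (((n + 1 : ℕ) : ℝ) * Real.log (n + 1 : ℕ)) ≤ 1 / (n * Real.log n) :=
    eventually_atTop.2 ⟨2, fun n hn => Real.antitoneOn_one_div_mul_log
      (by simp only [Set.mem_Ioi]; exact_mod_cast hn) (by simp only [Set.mem_Ioi]; norm_cast; omega)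
      (by norm_cast; omega)⟩
  have h_condensed : (fun k : ℕ => (2 : ℝ) ^ k * (1 / ((2 ^ k : ℕ) * Real.log (2 ^ k : ℕ))))
      = fun k : ℕ => (Real.log 2)⁻¹ * (1 / k) := by
    funext k
    push_cast
    rw [Real.log_pow, mul_one_div, div_mul_cancel_left₀ (by positivity)]
    ring
  rw [← summable_condensed_iff_of_eventually_nonneg h_nonneg h_mono, h_condensed,
    summable_mul_left_iff (inv_ne_zero (Real.log_pos one_lt_two).ne')]
  exact Real.not_summable_one_div_natCast

theorem ENNReal.tsum_ofReal_eq_top_of_not_summable {α : Type*} {f : α → ℝ} (hf : ∀ i, 0 ≤ f i)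
    (h : ¬ Summable f) : ∑' i, ENNReal.ofReal (f i) = ⊤ := by
  by_contra hne
  exact h (by simpa only [ENNReal.toReal_ofReal (hf _)] using ENNReal.summable_toReal hne)

theorem ENNReal.tsum_ofReal_one_div_mul_log_add_eq_top (m : ℕ) :
    ∑' j : ℕ, ENNReal.ofReal (1 / ((((m + j : ℕ) : ℝ) + 1) * Real.log (((m + j : ℕ) : ℝ) + 1)))
      = ⊤ := by
  refine ENNReal.tsum_ofReal_eq_top_of_not_summable (fun j => ?_) fun hs => ?_
  · exact one_div_nonneg.2 <| mul_nonneg (by positivity)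
      (by exact_mod_cast Real.log_natCast_nonneg (m + j + 1))
  · refine Real.not_summable_one_div_natCast_mul_log ((summable_nat_add_iff (m + 1)).1 ?_)
    refine hs.congr fun j => ?_
    push_cast
    ring_nf

theorem MeasureTheory.measure_compl_pair_eq_zero {α : Type*} [MeasurableSpace α]
    [MeasurableSingletonClass α] {μ : Measure α} [IsProbabilityMeasure μ] {a b : α} (hab : a ≠ b)
    (h : 1 ≤ μ {a} + μ {b}) : μ {a, b}ᶜ = 0 := by
  rw [prob_compl_eq_zero_iff (Set.toFinite _).measurableSet]
  refine le_antisymm prob_le_one ?_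
  rwa [Set.insert_eq, measure_union (Set.disjoint_singleton.2 hab) (measurableSet_singleton b)]

theorem MeasureTheory.measure_Ioi_eq_ite_of_two_point {μ : Measure ℕ} [IsProbabilityMeasure μ]
    {k : ℕ} (hk : k ≠ 0) {p : ℝ} (hμk : μ {k} = ENNReal.ofReal p)
    (hμ0 : μ {0} = ENNReal.ofReal (1 - p)) (n : ℕ) :
    μ (Set.Ioi n) = if n < k then ENNReal.ofReal p else 0 := by
  have hnull : μ {0, k}ᶜ = 0 := by
    refine measure_compl_pair_eq_zero hk.symm ?_
    rw [hμ0, hμk]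
    simpa using ENNReal.ofReal_add_le (p := 1 - p) (q := p)
  rw [← measure_inter_conull hnull, ← hμk]
  split_ifs with hnk
  · congr 1
    ext i
    simp only [Set.mem_inter_iff, Set.mem_Ioi, Set.mem_insert_iff, Set.mem_singleton_iff]
    omega
  · convert measure_empty (μ := μ)
    ext i
    simp only [Set.mem_inter_iff, Set.mem_Ioi, Set.mem_insert_iff, Set.mem_singleton_iff,
      Set.mem_empty_iff_false, iff_false]
    omega

theorem iSup_ite_lt_eq {α : Type*} [CompleteLattice α] {g : ℕ → α} {n : ℕ} (hn : 1 ≤ n)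
    (hg : AntitoneOn g (Set.Ioi n)) :
    ⨆ k : ℕ, ⨆ _ : 2 ≤ k, (if n < k then g k else ⊥) = g (n + 1) := by
  refine le_antisymm (iSup₂_le fun k _ => ?_) ?_
  · split_ifs with hnk
    · exact hg (Set.mem_Ioi.2 n.lt_succ_self) (Set.mem_Ioi.2 hnk) hnk
    · exact bot_le
  · refine le_iSup₂_of_le (n + 1) (by omega) ?_
    rw [if_pos n.lt_succ_self]

/-- On Ω = ℕ (discrete σ-algebra), let P n (for n ≥ 2) be the probability measure
with P n {n} = 1/(n·ln n) and P n {0} = 1 − 1/(n·ln n), and let X(k) = k. Then: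
(i) for every n ≥ 2, sup_{k≥2} P k (X > n) = 1/((n+1)·ln(n+1));
(ii) for every m ≥ 2, the series Σ_{n=m}^∞ sup_{k≥2} P k (X > n) diverges to +∞
(sum over integers n ≥ m, rendered by the index shift n = m + j);
(iii) consequently {X} is not S-uniformly integrable for the upper expectation
𝓔 = sup_{n≥2} E_{P n}, i.e. it is not the case that
lim_{m→∞} Σ_{n=m}^∞ sup_{k≥2} P k (X > n) = 0. -/
theorem counterexample_not_sui (P : ℕ → Measure ℕ)
    (hprob : ∀ n : ℕ, 2 ≤ n → IsProbabilityMeasure (P n))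
    (h1 : ∀ n : ℕ, 2 ≤ n → P n {n} = ENNReal.ofReal (1 / (n * Real.log n)))
    (h0 : ∀ n : ℕ, 2 ≤ n → P n {0} = ENNReal.ofReal (1 - 1 / (n * Real.log n))) :
    (∀ n : ℕ, 2 ≤ n →
      (⨆ k : ℕ, ⨆ _ : 2 ≤ k, P k {i : ℕ | n < i})
        = ENNReal.ofReal (1 / ((n + 1) * Real.log (n + 1)))) ∧
    (∀ m : ℕ, 2 ≤ m →
      (∑' j : ℕ, ⨆ k : ℕ, ⨆ _ : 2 ≤ k, P k {i : ℕ | m + j < i}) = ⊤) ∧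
    ¬ Tendsto (fun m : ℕ => ∑' j : ℕ, ⨆ k : ℕ, ⨆ _ : 2 ≤ k,
        P k {i : ℕ | m + j < i}) atTop (𝓝 0) := by
  have htail (k : ℕ) (hk : 2 ≤ k) (n : ℕ) : P k (Set.Ioi n)
      = if n < k then ENNReal.ofReal (1 / (k * Real.log k)) else ⊥ :=
    have := hprob k hk
    measure_Ioi_eq_ite_of_two_point (by omega) (h1 k hk) (h0 k hk) n
  have hsup (n : ℕ) (hn : 2 ≤ n) : (⨆ k : ℕ, ⨆ _ : 2 ≤ k, P k {i : ℕ | n < i})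
      = ENNReal.ofReal (1 / ((n + 1) * Real.log (n + 1))) := by
    refine (iSup_congr fun k => iSup_congr fun hk => htail k hk n).trans ?_
    rw [iSup_ite_lt_eq (by omega)
      (antitoneOn_ofReal_one_div_natCast_mul_log.mono (Set.Ioi_subset_Ioi (by omega)))]
    push_cast
    rfl
  have hdiv (m : ℕ) (hm : 2 ≤ m) :
      (∑' j : ℕ, ⨆ k : ℕ, ⨆ _ : 2 ≤ k, P k {i : ℕ | m + j < i}) = ⊤ := by
    rw [tsum_congr fun j => hsup (m + j) (by omega)]
    exact tsum_ofReal_one_div_mul_log_add_eq_top m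
  refine ⟨hsup, hdiv, fun h => ?_⟩
  have h_top : Tendsto (fun _ : ℕ => (⊤ : ℝ≥0∞)) atTop (𝓝 0) :=
    h.congr' (eventually_atTop.2 ⟨2, hdiv⟩)
  exact ENNReal.top_ne_zero (tendsto_nhds_unique tendsto_const_nhds h_top)
end
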